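/- Let a = (a_1,…,a_m) ∈ F^m and b = (b_1,…,b_m) ∈ F^m with (a,b) ≠ (0,0). Then for every c ∈ F, the only F-linear subspaces of A invariant under all operators in the twisted family Π_c^{a,b} are {0} and A. (These operators realize the action of sp(2m+2,F) under π_c on the space A·e^{Σ a_i x_i + Σ b_i y_i} of exponential-polynomial functions, transported to A; the exponent has zero coefficient on x_0.) -/

import Mathlib

open MvPolynomial

/-- The index set of the variables `x_0,x_1,…,x_m,y_1,…,y_m`:
`Sum.inl i` is `x_i` (`i = 0,…,m`) and `Sum.inr i` is `y_{i+1}` (`i = 0,…,m-1`). -/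
abbrev SpIdx (m : ℕ) := Fin (m + 1) ⊕ Fin m

/-- Multiplication by `x_i` (`i = 0,…,m`). -/
noncomputable def mx (F : Type*) [Field F] (m : ℕ) (i : Fin (m + 1)) :
    Module.End F (MvPolynomial (SpIdx m) F) :=
  LinearMap.mulLeft F (X (Sum.inl i))

/-- Multiplication by `y_{i+1}` (`i : Fin m`). -/
noncomputable def my (F : Type*) [Field F] (m : ℕ) (i : Fin m) :
    Module.End F (MvPolynomial (SpIdx m) F) :=
  LinearMap.mulLeft F (X (Sum.inr i))

/-- The partial derivative `∂_{x_i}`. -/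
noncomputable def dx (F : Type*) [Field F] (m : ℕ) (i : Fin (m + 1)) :
    Module.End F (MvPolynomial (SpIdx m) F) :=
  (pderiv (Sum.inl i)).toLinearMap

/-- The partial derivative `∂_{y_{i+1}}`. -/
noncomputable def dy (F : Type*) [Field F] (m : ℕ) (i : Fin m) :
    Module.End F (MvPolynomial (SpIdx m) F) :=
  (pderiv (Sum.inr i)).toLinearMap

/-- The Euler operator `D = Σ_{i=0}^m x_i ∂_{x_i} + Σ_{r=1}^m y_r ∂_{y_r}`. -/
noncomputable def Dsp (F : Type*) [Field F] (m : ℕ) :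
    Module.End F (MvPolynomial (SpIdx m) F) :=
  ∑ i : Fin (m + 1), mx F m i * dx F m i + ∑ r : Fin m, my F m r * dy F m r


/-- The twisted derivative `∂'_{x_{i+1}} = ∂_{x_{i+1}} + a_i·id` (`i : Fin m`). -/
noncomputable def dxp (F : Type*) [Field F] (m : ℕ) (a : Fin m → F) (i : Fin m) :
    Module.End F (MvPolynomial (SpIdx m) F) :=
  dx F m i.succ + a i • 1

/-- The twisted derivative `∂'_{y_{i+1}} = ∂_{y_{i+1}} + b_i·id` (`i : Fin m`). -/
noncomputable def dyp (F : Type*) [Field F] (m : ℕ) (b : Fin m → F) (i : Fin m) :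
    Module.End F (MvPolynomial (SpIdx m) F) :=
  dy F m i + b i • 1

/-- The twisted Euler operator `D' = x_0∂_{x_0} + Σ x_i∘∂'_{x_i} + Σ y_r∘∂'_{y_r}`. -/
noncomputable def Dspa (F : Type*) [Field F] (m : ℕ) (a b : Fin m → F) :
    Module.End F (MvPolynomial (SpIdx m) F) :=
  mx F m 0 * dx F m 0 + ∑ i : Fin m, mx F m i.succ * dxp F m a i
    + ∑ i : Fin m, my F m i * dyp F m b i

/-- The twisted family `Π_c^{a,b}`, realizing the projective oscillator representation
`π_c` of `sp(2m+2,F)` on `A·e^{Σ a_i x_i + Σ b_i y_i}`, transported to `A`. -/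
noncomputable def PiFamAB (F : Type*) [Field F] (m : ℕ) (a b : Fin m → F) (c : F) :
    Set (Module.End F (MvPolynomial (SpIdx m) F)) :=
  {T | (∃ i j : Fin m, T = mx F m i.succ * dxp F m a j - my F m j * dyp F m b i) ∨
       (∃ i j : Fin m, T = mx F m i.succ * dyp F m b j + mx F m j.succ * dyp F m b i) ∨
       (∃ i j : Fin m, T = my F m i * dxp F m a j + my F m j * dxp F m a i) ∨
       T = -dx F m 0 ∨
       T = mx F m 0 * (Dspa F m a b + c • 1) ∨
       (∃ i : Fin m, T = mx F m 0 * dxp F m a i - my F m i * (Dspa F m a b + c • 1)) ∨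
       (∃ i : Fin m, T = mx F m i.succ * dx F m 0 + dyp F m b i) ∨
       (∃ i : Fin m, T = my F m i * dx F m 0 - dxp F m a i) ∨
       (∃ i : Fin m, T = mx F m 0 * dyp F m b i + mx F m i.succ * (Dspa F m a b + c • 1)) ∨
       T = Dspa F m a b + mx F m 0 * dx F m 0 + c • 1}

namespace Stmt14Aux

variable {F : Type*} [CommRing F] {σ : Type*} [DecidableEq σ]

lemma coeff_pderiv (v : σ) (f : MvPolynomial σ F) (mo : σ →₀ ℕ) :
    coeff mo (pderiv v f) = ((mo v : F) + 1) * coeff (mo + Finsupp.single v 1) f := by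
  induction f using MvPolynomial.induction_on' with
  | add p q hp hq => simp [map_add, hp, hq, mul_add]
  | monomial d α =>
    rw [pderiv_monomial, coeff_monomial, coeff_monomial]
    by_cases hd : d = mo + Finsupp.single v 1
    · subst hd
      rw [if_pos (add_tsub_cancel_right _ _), if_pos rfl]
      have : (mo + Finsupp.single v 1 : σ →₀ ℕ) v = mo v + 1 := by
        simp [Finsupp.add_apply, Finsupp.single_eq_same]
      rw [this]
      push_cast
      ring
    · rw [if_neg hd, mul_zero]
      by_cases hdv : d v = 0
      · simp [hdv]
      · rw [if_neg]
        intro he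
        apply hd
        have h1 : Finsupp.single v 1 ≤ d := by
          rw [Finsupp.single_le_iff]; omega
        rw [← he, tsub_add_cancel_of_le h1]

lemma pderiv_comm' (v w : σ) (f : MvPolynomial σ F) :
    pderiv v (pderiv w f) = pderiv w (pderiv v f) := by
  by_cases hvw : v = w
  · subst hvw; rfl
  · ext mo
    rw [coeff_pderiv, coeff_pderiv, coeff_pderiv, coeff_pderiv]
    rw [show mo + Finsupp.single v 1 + Finsupp.single w 1
        = mo + Finsupp.single w 1 + Finsupp.single v 1 by
      rw [add_right_comm]]
    have h1 : (mo + Finsupp.single v 1 : σ →₀ ℕ) w = mo w := by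
      simp [Finsupp.add_apply, Finsupp.single_apply, if_neg hvw]
    have h2 : (mo + Finsupp.single w 1 : σ →₀ ℕ) v = mo v := by
      simp [Finsupp.add_apply, Finsupp.single_apply, if_neg (Ne.symm hvw)]
    rw [h1, h2]; ring

lemma totalDegree_pderiv_lt (v : σ) {f : MvPolynomial σ F} (h : pderiv v f ≠ 0) :
    (pderiv v f).totalDegree < f.totalDegree := by
  obtain ⟨mo0, hmo0⟩ := support_nonempty.2 h
  have key : ∀ mo ∈ (pderiv v f).support, (mo.sum fun _ e => e) < f.totalDegree := by
    intro mo hmo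
    rw [mem_support_iff, coeff_pderiv] at hmo
    have h2 : coeff (mo + Finsupp.single v 1) f ≠ 0 := by
      intro h0; rw [h0, mul_zero] at hmo; exact hmo rfl
    have h3 := le_totalDegree (mem_support_iff.2 h2)
    have h4 : ((mo + Finsupp.single v 1).sum fun _ e => e)
        = (mo.sum fun _ e => e) + 1 := by
      rw [Finsupp.sum_add_index' (fun _ => rfl) (fun _ _ _ => rfl)]
      simp [Finsupp.sum_single_index]
    omega
  have hpos : 0 < f.totalDegree := lt_of_le_of_lt (Nat.zero_le _) (key mo0 hmo0)
  rw [totalDegree]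
  exact Finset.sup_lt_iff (by simpa using hpos) |>.2 key


lemma pderiv_X_pow_mul {w v : σ} (hwv : w ≠ v) (n : ℕ) (h : MvPolynomial σ F) :
    pderiv w (X v ^ n * h) = X v ^ n * pderiv w h := by
  rw [pderiv_mul, pderiv_pow, pderiv_X_of_ne (Ne.symm hwv)]
  ring

lemma X_pow_mul_pderiv (v : σ) (n : ℕ) (h : MvPolynomial σ F) (hh : pderiv v h = 0) :
    X v * pderiv v (X v ^ n * h) = n • (X v ^ n * h) := by
  induction n with
  | zero => simp [hh]
  | succ n ih =>
    have e1 : X v ^ (n + 1) * h = X v * (X v ^ n * h) := by ring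
    rw [e1]
    calc X v * pderiv v (X v * (X v ^ n * h))
        = X v * (X v ^ n * h) + X v * (X v * pderiv v (X v ^ n * h)) := by
          rw [pderiv_mul, pderiv_X_self, one_mul]; ring
      _ = X v * (X v ^ n * h) + X v * (n • (X v ^ n * h)) := by rw [ih]
      _ = (n + 1) • (X v * (X v ^ n * h)) := by
          rw [mul_smul_comm, succ_nsmul, add_comm]

lemma neumann {F : Type*} [Field F] {σ : Type*} [DecidableEq σ] (v : σ)
    (S : Submodule F (MvPolynomial σ F))
    (hS : ∀ g ∈ S, pderiv v g ∈ S) {α : F} (hα : α ≠ 0) :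
    ∀ f ∈ S, ∃ u ∈ S, pderiv v u + α • u = f := by
  suffices h : ∀ n : ℕ, ∀ f ∈ S, f.totalDegree ≤ n → ∃ u ∈ S, pderiv v u + α • u = f by
    intro f hf; exact h f.totalDegree f hf le_rfl
  intro n
  induction n with
  | zero =>
    intro f hf hd
    have hz : pderiv v f = 0 := by
      by_contra hz
      have := totalDegree_pderiv_lt v hz
      omega
    refine ⟨α⁻¹ • f, S.smul_mem _ hf, ?_⟩
    rw [Derivation.map_smul, hz, smul_zero, zero_add, smul_smul, mul_inv_cancel₀ hα, one_smul]
  | succ n ih =>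
    intro f hf hd
    by_cases hz : pderiv v f = 0
    · refine ⟨α⁻¹ • f, S.smul_mem _ hf, ?_⟩
      rw [Derivation.map_smul, hz, smul_zero, zero_add, smul_smul, mul_inv_cancel₀ hα, one_smul]
    · have hlt := totalDegree_pderiv_lt v hz
      obtain ⟨w, hwS, hw⟩ := ih (pderiv v f) (hS f hf) (by omega)
      refine ⟨α⁻¹ • (f - w), S.smul_mem _ (S.sub_mem hf hwS), ?_⟩
      have e : pderiv v (f - w) = α • w := by
        have : pderiv v (f - w) = pderiv v f - pderiv v w := by
          simp [sub_eq_add_neg, Derivation.map_add, Derivation.map_neg]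
        rw [this, ← hw]; abel
      rw [Derivation.map_smul, e, smul_smul, inv_mul_cancel₀ hα, one_smul, smul_smul,
        mul_inv_cancel₀ hα, one_smul]
      abel

lemma eq_C_of_pderiv {F : Type*} [Field F] [CharZero F] {σ : Type*} [DecidableEq σ]
    (f : MvPolynomial σ F) (h : ∀ v : σ, pderiv v f = 0) : f = C (coeff 0 f) := by
  ext mo
  by_cases hmo : mo = 0
  · subst hmo; simp
  · rw [coeff_C, if_neg (fun he => hmo he.symm)]
    obtain ⟨v, hv⟩ : ∃ v, mo v ≠ 0 := by
      by_contra hc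
      push_neg at hc
      exact hmo (Finsupp.ext hc)
    have h1 : Finsupp.single v 1 ≤ mo := by rw [Finsupp.single_le_iff]; omega
    have := coeff_pderiv v f (mo - Finsupp.single v 1)
    rw [h v, tsub_add_cancel_of_le h1] at this
    have h2 : ((mo - Finsupp.single v 1 : σ →₀ ℕ) v : F) + 1 ≠ 0 := by
      have h3 : (mo - Finsupp.single v 1 : σ →₀ ℕ) v = mo v - 1 := by
        simp [Finsupp.tsub_apply, Finsupp.single_eq_same]
      rw [h3]
      have : ((mo v - 1 : ℕ) : F) + 1 = ((mo v : ℕ) : F) := by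
        rw [show ((mo v : ℕ) : F) = ((mo v - 1 + 1 : ℕ) : F) by congr 1; omega]
        push_cast; ring
      rw [this]
      exact_mod_cast Nat.cast_ne_zero.2 hv
    have h0 : coeff 0 (0 : MvPolynomial σ F) = 0 := by simp
    rw [coeff_zero] at this
    exact (mul_eq_zero.1 this.symm).resolve_left h2

lemma one_mem_of_ne_zero {F : Type*} [Field F] [CharZero F] {σ : Type*} [DecidableEq σ]
    (S : Submodule F (MvPolynomial σ F)) (hS : ∀ (v : σ), ∀ g ∈ S, pderiv v g ∈ S)
    {g : MvPolynomial σ F} (hg : g ∈ S) (hg0 : g ≠ 0) : (1 : MvPolynomial σ F) ∈ S := by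
  suffices h : ∀ n : ℕ, ∀ g ∈ S, g ≠ 0 → g.totalDegree ≤ n → (1 : MvPolynomial σ F) ∈ S by
    exact h g.totalDegree g hg hg0 le_rfl
  intro n
  induction n with
  | zero =>
    intro g hg hg0 hd
    have hz : ∀ v : σ, pderiv v g = 0 := by
      intro v; by_contra hz
      have := totalDegree_pderiv_lt v hz; omega
    have hC := eq_C_of_pderiv g hz
    set α := coeff 0 g with hadef
    have hc0 : α ≠ 0 := fun h0 => hg0 (by rw [hC, h0, map_zero])
    have h1 : α⁻¹ • g = 1 := by
      rw [hC, smul_eq_C_mul, ← map_mul, inv_mul_cancel₀ hc0, C_1]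
    rw [← h1]; exact S.smul_mem _ hg
  | succ n ih =>
    intro g hg hg0 hd
    by_cases hz : ∀ v : σ, pderiv v g = 0
    · have hC := eq_C_of_pderiv g hz
      set α := coeff 0 g with hadef
      have hc0 : α ≠ 0 := fun h0 => hg0 (by rw [hC, h0, map_zero])
      have h1 : α⁻¹ • g = 1 := by
        rw [hC, smul_eq_C_mul, ← map_mul, inv_mul_cancel₀ hc0, C_1]
      rw [← h1]; exact S.smul_mem _ hg
    · push_neg at hz
      obtain ⟨v, hv⟩ := hz
      have hlt := totalDegree_pderiv_lt v hv
      exact ih (pderiv v g) (hS v g hg) hv (by omega)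

lemma coeff_eq_zero_of_pderiv_eq_zero {F : Type*} [Field F] [CharZero F] {σ : Type*}
    [DecidableEq σ] {v : σ} {g : MvPolynomial σ F} (hg : pderiv v g = 0)
    {d : σ →₀ ℕ} (hd : d v ≠ 0) : coeff d g = 0 := by
  have h1 : Finsupp.single v 1 ≤ d := by rw [Finsupp.single_le_iff]; omega
  have h2 := coeff_pderiv v g (d - Finsupp.single v 1)
  rw [hg, tsub_add_cancel_of_le h1, coeff_zero] at h2
  rcases mul_eq_zero.1 h2.symm with h | h
  · exfalso
    rw [show (((d - Finsupp.single v 1 : σ →₀ ℕ) v : ℕ) : F) + 1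
        = ((((d - Finsupp.single v 1 : σ →₀ ℕ) v : ℕ) + 1 : ℕ) : F) by push_cast; ring] at h
    exact Nat.cast_ne_zero.2 (Nat.succ_ne_zero _) h
  · exact h

end Stmt14Aux


namespace Stmt14Ops

variable {F : Type*} [Field F] {m : ℕ} (a b : Fin m → F) (c : F)

open Stmt14Aux

lemma dx_apply (i : Fin (m+1)) (f : MvPolynomial (SpIdx m) F) :
    dx F m i f = pderiv (Sum.inl i) f := rfl

lemma Dspa_apply (f : MvPolynomial (SpIdx m) F) : Dspa F m a b f =
    X (Sum.inl 0) * pderiv (Sum.inl 0) f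
    + ∑ i : Fin m, X (Sum.inl i.succ) * (pderiv (Sum.inl i.succ) f + a i • f)
    + ∑ i : Fin m, X (Sum.inr i) * (pderiv (Sum.inr i) f + b i • f) := by
  simp [Dspa, mx, my, dx, dy, dxp, dyp, LinearMap.add_apply, LinearMap.sum_apply,
    Module.End.mul_apply, LinearMap.mulLeft_apply, LinearMap.smul_apply, Module.End.one_apply]

lemma op1_apply (i j : Fin m) (f : MvPolynomial (SpIdx m) F) :
    (mx F m i.succ * dxp F m a j - my F m j * dyp F m b i) f =
      X (Sum.inl i.succ) * (pderiv (Sum.inl j.succ) f + a j • f)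
        - X (Sum.inr j) * (pderiv (Sum.inr i) f + b i • f) := by
  simp [mx, my, dx, dy, dxp, dyp, LinearMap.sub_apply, Module.End.mul_apply,
    LinearMap.mulLeft_apply, LinearMap.add_apply, LinearMap.smul_apply, Module.End.one_apply]

lemma op2_apply (i j : Fin m) (f : MvPolynomial (SpIdx m) F) :
    (mx F m i.succ * dyp F m b j + mx F m j.succ * dyp F m b i) f =
      X (Sum.inl i.succ) * (pderiv (Sum.inr j) f + b j • f)
        + X (Sum.inl j.succ) * (pderiv (Sum.inr i) f + b i • f) := by
  simp [mx, my, dx, dy, dxp, dyp, Module.End.mul_apply,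
    LinearMap.mulLeft_apply, LinearMap.add_apply, LinearMap.smul_apply, Module.End.one_apply]

lemma op3_apply (i j : Fin m) (f : MvPolynomial (SpIdx m) F) :
    (my F m i * dxp F m a j + my F m j * dxp F m a i) f =
      X (Sum.inr i) * (pderiv (Sum.inl j.succ) f + a j • f)
        + X (Sum.inr j) * (pderiv (Sum.inl i.succ) f + a i • f) := by
  simp [mx, my, dx, dy, dxp, dyp, Module.End.mul_apply,
    LinearMap.mulLeft_apply, LinearMap.add_apply, LinearMap.smul_apply, Module.End.one_apply]

lemma op6_apply (i : Fin m) (f : MvPolynomial (SpIdx m) F) :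
    (mx F m 0 * dxp F m a i - my F m i * (Dspa F m a b + c • 1)) f =
      X (Sum.inl 0) * (pderiv (Sum.inl i.succ) f + a i • f)
        - X (Sum.inr i) * (Dspa F m a b f + c • f) := by
  simp [mx, my, dx, dy, dxp, dyp, LinearMap.sub_apply, Module.End.mul_apply,
    LinearMap.mulLeft_apply, LinearMap.add_apply, LinearMap.smul_apply, Module.End.one_apply]

lemma op7_apply (i : Fin m) (f : MvPolynomial (SpIdx m) F) :
    (mx F m i.succ * dx F m 0 + dyp F m b i) f =
      X (Sum.inl i.succ) * pderiv (Sum.inl 0) f + (pderiv (Sum.inr i) f + b i • f) := by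
  simp [mx, my, dx, dy, dxp, dyp, Module.End.mul_apply,
    LinearMap.mulLeft_apply, LinearMap.add_apply, LinearMap.smul_apply, Module.End.one_apply]

lemma op8_apply (i : Fin m) (f : MvPolynomial (SpIdx m) F) :
    (my F m i * dx F m 0 - dxp F m a i) f =
      X (Sum.inr i) * pderiv (Sum.inl 0) f - (pderiv (Sum.inl i.succ) f + a i • f) := by
  simp [mx, my, dx, dy, dxp, dyp, LinearMap.sub_apply, Module.End.mul_apply,
    LinearMap.mulLeft_apply, LinearMap.add_apply, LinearMap.smul_apply, Module.End.one_apply]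

lemma op9_apply (i : Fin m) (f : MvPolynomial (SpIdx m) F) :
    (mx F m 0 * dyp F m b i + mx F m i.succ * (Dspa F m a b + c • 1)) f =
      X (Sum.inl 0) * (pderiv (Sum.inr i) f + b i • f)
        + X (Sum.inl i.succ) * (Dspa F m a b f + c • f) := by
  simp [mx, my, dx, dy, dxp, dyp, Module.End.mul_apply,
    LinearMap.mulLeft_apply, LinearMap.add_apply, LinearMap.smul_apply, Module.End.one_apply]

lemma hB_mul {v : SpIdx m} (hv : v ≠ Sum.inl 0) (f : MvPolynomial (SpIdx m) F)
    (hf : pderiv (Sum.inl (0 : Fin (m+1))) f = 0) :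
    pderiv (Sum.inl (0 : Fin (m+1))) (X v * f) = 0 := by
  rw [pderiv_mul, pderiv_X_of_ne hv, hf, mul_zero, zero_mul, add_zero]

lemma hB_pd (w : SpIdx m) (f : MvPolynomial (SpIdx m) F)
    (hf : pderiv (Sum.inl (0 : Fin (m+1))) f = 0) :
    pderiv (Sum.inl (0 : Fin (m+1))) (pderiv w f) = 0 := by
  rw [pderiv_comm', hf, map_zero]

lemma hB_Dspa (f : MvPolynomial (SpIdx m) F)
    (hf : pderiv (Sum.inl (0 : Fin (m+1))) f = 0) :
    pderiv (Sum.inl (0 : Fin (m+1))) (Dspa F m a b f) = 0 := by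
  rw [Dspa_apply]
  rw [map_add, map_add, map_sum, map_sum]
  rw [hf, mul_zero, map_zero]
  have hx : ∀ i : Fin m, pderiv (Sum.inl (0 : Fin (m+1)))
      (X (Sum.inl i.succ) * (pderiv (Sum.inl i.succ) f + a i • f)) = 0 := by
    intro i
    apply hB_mul (by simp [Fin.succ_ne_zero])
    rw [map_add, hB_pd _ _ hf, Derivation.map_smul, hf, smul_zero, add_zero]
  have hy : ∀ i : Fin m, pderiv (Sum.inl (0 : Fin (m+1)))
      (X (Sum.inr i) * (pderiv (Sum.inr i) f + b i • f)) = 0 := by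
    intro i
    apply hB_mul (by simp)
    rw [map_add, hB_pd _ _ hf, Derivation.map_smul, hf, smul_zero, add_zero]
  simp [hx, hy]

lemma Dspa_X_pow (n : ℕ) (h : MvPolynomial (SpIdx m) F)
    (hh : pderiv (Sum.inl (0 : Fin (m+1))) h = 0) :
    Dspa F m a b (X (Sum.inl (0 : Fin (m+1))) ^ n * h)
      = n • (X (Sum.inl (0 : Fin (m+1))) ^ n * h)
        + X (Sum.inl (0 : Fin (m+1))) ^ n * Dspa F m a b h := by
  rw [Dspa_apply, Dspa_apply]
  rw [X_pow_mul_pderiv _ n h hh, hh, mul_zero, zero_add, mul_add, Finset.mul_sum,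
    Finset.mul_sum]
  rw [add_assoc]
  refine congrArg ((n • (X (Sum.inl (0 : Fin (m+1))) ^ n * h) : MvPolynomial (SpIdx m) F) + ·) ?_
  refine congrArg₂ (fun p q : MvPolynomial (SpIdx m) F => p + q) ?_ ?_
  · apply Finset.sum_congr rfl
    intro i _
    rw [pderiv_X_pow_mul (by simp [Fin.succ_ne_zero]), smul_eq_C_mul, smul_eq_C_mul]
    ring
  · apply Finset.sum_congr rfl
    intro i _
    rw [pderiv_X_pow_mul (by simp), smul_eq_C_mul, smul_eq_C_mul]
    ring

end Stmt14Ops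

open Stmt14Aux Stmt14Ops

set_option maxHeartbeats 1000000 in
/-- if `(a,b) ≠ (0,0)`, then for every `c` the only subspaces of `A`
invariant under every operator of the twisted family `Π_c^{a,b}` are `{0}` and `A`. -/
theorem stmt_14 (F : Type*) [Field F] [CharZero F] (m : ℕ) (hm : 1 ≤ m)
    (a b : Fin m → F) (hab : ¬(a = 0 ∧ b = 0)) (c : F) :
    ∀ W : Submodule F (MvPolynomial (SpIdx m) F),
      (∀ T ∈ PiFamAB F m a b c, ∀ f ∈ W, T f ∈ W) →
      W = ⊥ ∨ W = ⊤ := by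
  intro W hW
  by_cases hWbot : W = ⊥
  · exact Or.inl hWbot
  right
  obtain ⟨f0, hf0W, hf00⟩ := (Submodule.ne_bot_iff W).1 hWbot
  have hW4 : ∀ f ∈ W, pderiv (Sum.inl (0 : Fin (m+1))) f ∈ W := by
    intro f hf
    have h := hW _ (Or.inr (Or.inr (Or.inr (Or.inl rfl)))) f hf
    have e : (-dx F m 0 : Module.End F (MvPolynomial (SpIdx m) F)) f
        = -(pderiv (Sum.inl 0) f) := rfl
    rw [e] at h
    simpa using W.neg_mem h
  set WB := W ⊓ LinearMap.ker (dx F m 0) with hWBdef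
  have hmemWB : ∀ f : MvPolynomial (SpIdx m) F,
      f ∈ WB ↔ f ∈ W ∧ pderiv (Sum.inl (0 : Fin (m+1))) f = 0 := by
    intro f
    rw [hWBdef, Submodule.mem_inf, LinearMap.mem_ker, dx_apply]
  have hWBx : ∀ i : Fin m, ∀ f ∈ WB, pderiv (Sum.inl i.succ) f + a i • f ∈ WB := by
    intro i f hf
    obtain ⟨hfW, hfB⟩ := (hmemWB f).1 hf
    have h := hW _ (Or.inr (Or.inr (Or.inr (Or.inr (Or.inr (Or.inr (Or.inr (Or.inl
      ⟨i, rfl⟩)))))))) f hfW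
    rw [op8_apply, hfB, mul_zero, zero_sub] at h
    rw [hmemWB]
    refine ⟨by simpa using W.neg_mem h, ?_⟩
    rw [map_add, hB_pd _ _ hfB, Derivation.map_smul, hfB, smul_zero, add_zero]
  have hWBy : ∀ i : Fin m, ∀ f ∈ WB, pderiv (Sum.inr i) f + b i • f ∈ WB := by
    intro i f hf
    obtain ⟨hfW, hfB⟩ := (hmemWB f).1 hf
    have h := hW _ (Or.inr (Or.inr (Or.inr (Or.inr (Or.inr (Or.inr (Or.inl
      ⟨i, rfl⟩))))))) f hfW
    rw [op7_apply, hfB, mul_zero, zero_add] at h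
    rw [hmemWB]
    refine ⟨h, ?_⟩
    rw [map_add, hB_pd _ _ hfB, Derivation.map_smul, hfB, smul_zero, add_zero]
  have hWBpd : ∀ v : SpIdx m, ∀ f ∈ WB, pderiv v f ∈ WB := by
    intro v f hf
    obtain ⟨hfW, hfB⟩ := (hmemWB f).1 hf
    cases v with
    | inl j =>
      by_cases hj : j = 0
      · subst hj; rw [hfB]; exact WB.zero_mem
      · obtain ⟨i, rfl⟩ := Fin.exists_succ_eq_of_ne_zero hj
        have := WB.sub_mem (hWBx i f hf) (WB.smul_mem (a i) hf)
        simpa using this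
    | inr i =>
      have := WB.sub_mem (hWBy i f hf) (WB.smul_mem (b i) hf)
      simpa using this
  have hk : (∃ k, a k ≠ 0) ∨ (∃ k, b k ≠ 0) := by
    by_contra hc
    push_neg at hc
    exact hab ⟨funext fun k => hc.1 k, funext fun k => hc.2 k⟩
  have hXmul : ∀ v : SpIdx m, v ≠ Sum.inl 0 → ∀ f ∈ WB, X v * f ∈ WB := by
    rcases hk with ⟨k, hk0⟩ | ⟨k, hk0⟩
    · have hpre : ∀ f ∈ WB, ∃ u ∈ WB, pderiv (Sum.inl k.succ) u + a k • u = f :=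
        neumann (Sum.inl k.succ) WB (fun g hg => hWBpd _ g hg) hk0
      have hyk : ∀ f ∈ WB, X (Sum.inr k) * f ∈ WB := by
        intro f hf
        obtain ⟨u, huWB, hu⟩ := hpre f hf
        obtain ⟨huW, huB⟩ := (hmemWB u).1 huWB
        have h := hW _ (Or.inr (Or.inr (Or.inl ⟨k, k, rfl⟩))) u huW
        rw [op3_apply, hu] at h
        have h2 : X (Sum.inr k) * f ∈ W := by
          have h3 := W.smul_mem (2 : F)⁻¹ h
          rwa [← two_smul F (X (Sum.inr k) * f), smul_smul,
            inv_mul_cancel₀ (by norm_num : (2:F) ≠ 0), one_smul] at h3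
        exact (hmemWB _).2 ⟨h2, hB_mul (by simp) f ((hmemWB f).1 hf).2⟩
      have hymul : ∀ i : Fin m, ∀ f ∈ WB, X (Sum.inr i) * f ∈ WB := by
        intro i f hf
        obtain ⟨u, huWB, hu⟩ := hpre f hf
        obtain ⟨huW, huB⟩ := (hmemWB u).1 huWB
        have h := hW _ (Or.inr (Or.inr (Or.inl ⟨i, k, rfl⟩))) u huW
        rw [op3_apply, hu] at h
        have hs : X (Sum.inr k) * (pderiv (Sum.inl i.succ) u + a i • u) ∈ WB :=
          hyk _ (hWBx i u huWB)
        have h2 : X (Sum.inr i) * f ∈ W := by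
          have h3 := W.sub_mem h ((hmemWB _).1 hs).1
          simpa using h3
        exact (hmemWB _).2 ⟨h2, hB_mul (by simp) f ((hmemWB f).1 hf).2⟩
      have hxmul : ∀ i : Fin m, ∀ f ∈ WB, X (Sum.inl i.succ) * f ∈ WB := by
        intro i f hf
        obtain ⟨u, huWB, hu⟩ := hpre f hf
        obtain ⟨huW, huB⟩ := (hmemWB u).1 huWB
        have h := hW _ (Or.inl ⟨i, k, rfl⟩) u huW
        rw [op1_apply, hu] at h
        have hs : X (Sum.inr k) * (pderiv (Sum.inr i) u + b i • u) ∈ WB :=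
          hyk _ (hWBy i u huWB)
        have h2 : X (Sum.inl i.succ) * f ∈ W := by
          have h3 := W.add_mem h ((hmemWB _).1 hs).1
          simpa using h3
        exact (hmemWB _).2 ⟨h2, hB_mul (by simp [Fin.succ_ne_zero]) f ((hmemWB f).1 hf).2⟩
      intro v hv f hf
      cases v with
      | inl j =>
        obtain ⟨i, rfl⟩ := Fin.exists_succ_eq_of_ne_zero
          (show j ≠ 0 from fun h0 => hv (by rw [h0]))
        exact hxmul i f hf
      | inr i => exact hymul i f hf
    · have hpre : ∀ f ∈ WB, ∃ u ∈ WB, pderiv (Sum.inr k) u + b k • u = f :=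
        neumann (Sum.inr k) WB (fun g hg => hWBpd _ g hg) hk0
      have hxk : ∀ f ∈ WB, X (Sum.inl k.succ) * f ∈ WB := by
        intro f hf
        obtain ⟨u, huWB, hu⟩ := hpre f hf
        obtain ⟨huW, huB⟩ := (hmemWB u).1 huWB
        have h := hW _ (Or.inr (Or.inl ⟨k, k, rfl⟩)) u huW
        rw [op2_apply, hu] at h
        have h2 : X (Sum.inl k.succ) * f ∈ W := by
          have h3 := W.smul_mem (2 : F)⁻¹ h
          rwa [← two_smul F (X (Sum.inl k.succ) * f), smul_smul,
            inv_mul_cancel₀ (by norm_num : (2:F) ≠ 0), one_smul] at h3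
        exact (hmemWB _).2 ⟨h2, hB_mul (by simp [Fin.succ_ne_zero]) f ((hmemWB f).1 hf).2⟩
      have hxmul : ∀ i : Fin m, ∀ f ∈ WB, X (Sum.inl i.succ) * f ∈ WB := by
        intro i f hf
        obtain ⟨u, huWB, hu⟩ := hpre f hf
        obtain ⟨huW, huB⟩ := (hmemWB u).1 huWB
        have h := hW _ (Or.inr (Or.inl ⟨i, k, rfl⟩)) u huW
        rw [op2_apply, hu] at h
        have hs : X (Sum.inl k.succ) * (pderiv (Sum.inr i) u + b i • u) ∈ WB :=
          hxk _ (hWBy i u huWB)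
        have h2 : X (Sum.inl i.succ) * f ∈ W := by
          have h3 := W.sub_mem h ((hmemWB _).1 hs).1
          simpa using h3
        exact (hmemWB _).2 ⟨h2, hB_mul (by simp [Fin.succ_ne_zero]) f ((hmemWB f).1 hf).2⟩
      have hymul : ∀ i : Fin m, ∀ f ∈ WB, X (Sum.inr i) * f ∈ WB := by
        intro i f hf
        obtain ⟨u, huWB, hu⟩ := hpre f hf
        obtain ⟨huW, huB⟩ := (hmemWB u).1 huWB
        have h := hW _ (Or.inl ⟨k, i, rfl⟩) u huW
        rw [op1_apply, hu] at h
        have hs : X (Sum.inl k.succ) * (pderiv (Sum.inl i.succ) u + a i • u) ∈ WB :=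
          hxk _ (hWBx i u huWB)
        have h2 : X (Sum.inr i) * f ∈ W := by
          have h3 := W.sub_mem ((hmemWB _).1 hs).1 h
          simpa using h3
        exact (hmemWB _).2 ⟨h2, hB_mul (by simp) f ((hmemWB f).1 hf).2⟩
      intro v hv f hf
      cases v with
      | inl j =>
        obtain ⟨i, rfl⟩ := Fin.exists_succ_eq_of_ne_zero
          (show j ≠ 0 from fun h0 => hv (by rw [h0]))
        exact hxmul i f hf
      | inr i => exact hymul i f hf
  have hkey : ∃ (v w : SpIdx m) (α ε : F), α ≠ 0 ∧ v ≠ Sum.inl 0 ∧ w ≠ Sum.inl 0 ∧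
      ∀ f ∈ W, X (Sum.inl (0 : Fin (m+1))) * (pderiv v f + α • f)
        + ε • (X w * (Dspa F m a b f + c • f)) ∈ W := by
    rcases hk with ⟨k, hk0⟩ | ⟨k, hk0⟩
    · refine ⟨Sum.inl k.succ, Sum.inr k, a k, -1, hk0,
        by simp [Fin.succ_ne_zero], by simp, ?_⟩
      intro f hf
      have h := hW _ (Or.inr (Or.inr (Or.inr (Or.inr (Or.inr (Or.inl ⟨k, rfl⟩)))))) f hf
      rw [op6_apply] at h
      simpa [neg_smul, one_smul, sub_eq_add_neg] using h
    · refine ⟨Sum.inr k, Sum.inl k.succ, b k, 1, hk0,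
        by simp, by simp [Fin.succ_ne_zero], ?_⟩
      intro f hf
      have h := hW _ (Or.inr (Or.inr (Or.inr (Or.inr (Or.inr (Or.inr (Or.inr (Or.inr
        (Or.inl ⟨k, rfl⟩))))))))) f hf
      rw [op9_apply] at h
      simpa [one_smul] using h
  have hdesc : ∀ n : ℕ, ∀ f ∈ W, f ≠ 0 → f.totalDegree ≤ n →
      ∃ g ∈ W, g ≠ 0 ∧ pderiv (Sum.inl (0 : Fin (m+1))) g = 0 := by
    intro n
    induction n with
    | zero =>
      intro f hf hf0 hd
      by_cases hz : pderiv (Sum.inl (0 : Fin (m+1))) f = 0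
      · exact ⟨f, hf, hf0, hz⟩
      · have := totalDegree_pderiv_lt _ hz; omega
    | succ n ih =>
      intro f hf hf0 hd
      by_cases hz : pderiv (Sum.inl (0 : Fin (m+1))) f = 0
      · exact ⟨f, hf, hf0, hz⟩
      · exact ih _ (hW4 f hf) hz
          (by have := totalDegree_pderiv_lt (Sum.inl (0 : Fin (m+1))) hz; omega)
  obtain ⟨g0, hg0W, hg00, hg0B⟩ := hdesc f0.totalDegree f0 hf0W hf00 le_rfl
  have hone : (1 : MvPolynomial (SpIdx m) F) ∈ WB :=
    one_mem_of_ne_zero WB (fun v g hg => hWBpd v g hg)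
      ((hmemWB g0).2 ⟨hg0W, hg0B⟩) hg00
  have hXpow : ∀ (v : SpIdx m), v ≠ Sum.inl 0 → ∀ (k : ℕ), ∀ f ∈ WB,
      X v ^ k * f ∈ WB := by
    intro v hv k
    induction k with
    | zero => intro f hf; simpa using hf
    | succ k ih =>
      intro f hf
      have e : X v ^ (k+1) * f = X v * (X v ^ k * f) := by ring
      rw [e]; exact hXmul v hv _ (ih f hf)
  have hmono : ∀ d : SpIdx m →₀ ℕ, d (Sum.inl 0) = 0 → monomial d (1:F) ∈ WB := by
    intro d
    induction d using Finsupp.induction with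
    | zero => intro _; simpa [monomial_zero'] using hone
    | single_add v k d' hv' hk ih =>
      intro h0
      have hadd : (Finsupp.single v k) (Sum.inl (0 : Fin (m+1))) + d' (Sum.inl 0) = 0 := by
        rw [← Finsupp.add_apply]; exact h0
      have hvne : v ≠ Sum.inl 0 := by
        intro hveq; subst hveq
        rw [Finsupp.single_eq_same] at hadd
        exact hk (by omega)
      have hd' : d' (Sum.inl (0 : Fin (m+1))) = 0 := by omega
      have e : monomial (Finsupp.single v k + d') (1:F) = X v ^ k * monomial d' 1 := by
        rw [X_pow_eq_monomial, monomial_mul, one_mul]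
      rw [e]
      exact hXpow v hvne k _ (ih hd')
  have hBW : ∀ g : MvPolynomial (SpIdx m) F,
      pderiv (Sum.inl (0 : Fin (m+1))) g = 0 → g ∈ W := by
    intro g hg
    rw [g.as_sum]
    apply Submodule.sum_mem
    intro d hd
    have hd0 : d (Sum.inl (0 : Fin (m+1))) = 0 := by
      by_contra hd0
      exact (mem_support_iff.1 hd) (coeff_eq_zero_of_pderiv_eq_zero hg hd0)
    have e : monomial d (coeff d g) = (coeff d g) • monomial d (1:F) := by
      rw [smul_monomial, smul_eq_mul, mul_one]
    rw [e]
    exact ((hmemWB _).1 (WB.smul_mem _ (hmono d hd0))).1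
  obtain ⟨v, w, α, ε, hα, hv, hw, hop⟩ := hkey
  have hpow : ∀ n : ℕ, ∀ g : MvPolynomial (SpIdx m) F,
      pderiv (Sum.inl (0 : Fin (m+1))) g = 0 →
      X (Sum.inl (0 : Fin (m+1))) ^ n * g ∈ W := by
    intro n
    induction n with
    | zero => intro g hg; rw [pow_zero, one_mul]; exact hBW g hg
    | succ n ih =>
      intro g hg
      have hker : ∀ u ∈ LinearMap.ker (dx F m 0), pderiv v u ∈ LinearMap.ker (dx F m 0) := by
        intro u hu
        rw [LinearMap.mem_ker, dx_apply] at hu ⊢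
        exact hB_pd v u hu
      obtain ⟨h, hhB, hh⟩ := neumann v (LinearMap.ker (dx F m 0)) hker hα g
        (by rw [LinearMap.mem_ker, dx_apply]; exact hg)
      rw [LinearMap.mem_ker, dx_apply] at hhB
      have hXnh : X (Sum.inl (0 : Fin (m+1))) ^ n * h ∈ W := ih h hhB
      have hT := hop _ hXnh
      set q : MvPolynomial (SpIdx m) F := C ((n:F)) * h + C c * h + Dspa F m a b h
        with hq
      have hqB : pderiv (Sum.inl (0 : Fin (m+1))) q = 0 := by
        rw [hq, map_add, map_add, pderiv_C_mul, pderiv_C_mul, hhB, mul_zero, mul_zero,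
          hB_Dspa a b h hhB, add_zero, add_zero]
      have hXq : X (Sum.inl (0 : Fin (m+1))) ^ n * (X w * q) ∈ W :=
        ih _ (hB_mul hw _ hqB)
      have heq : X (Sum.inl (0 : Fin (m+1))) ^ (n+1) * g
          = (X (Sum.inl (0 : Fin (m+1))) * (pderiv v (X (Sum.inl (0 : Fin (m+1))) ^ n * h)
              + α • (X (Sum.inl (0 : Fin (m+1))) ^ n * h))
            + ε • (X w * (Dspa F m a b (X (Sum.inl (0 : Fin (m+1))) ^ n * h)
              + c • (X (Sum.inl (0 : Fin (m+1))) ^ n * h))))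
            + (-ε) • (X (Sum.inl (0 : Fin (m+1))) ^ n * (X w * q)) := by
        rw [pderiv_X_pow_mul hv, Dspa_X_pow a b n h hhB, ← hh]
        simp only [smul_eq_C_mul, nsmul_eq_mul, hq, map_neg]
        rw [show ((n : MvPolynomial (SpIdx m) F)) = C ((n:F)) from (map_natCast C n).symm]
        ring
      rw [heq]
      exact W.add_mem hT (W.smul_mem _ hXq)
  rw [eq_top_iff]
  intro f hfT
  clear hfT
  induction f using MvPolynomial.induction_on' with
  | add p q hp hq => exact W.add_mem hp hq
  | monomial d α' =>
    have e : monomial d α' = X (Sum.inl (0 : Fin (m+1))) ^ (d (Sum.inl 0))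
        * monomial (d.erase (Sum.inl 0)) α' := by
      rw [X_pow_eq_monomial, monomial_mul, one_mul, Finsupp.single_add_erase]
    have eB : pderiv (Sum.inl (0 : Fin (m+1)))
        (monomial (d.erase (Sum.inl 0)) α') = 0 := by
      rw [pderiv_monomial]
      simp [Finsupp.erase_same]
    rw [e]
    exact hpow _ _ eB
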